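/- arXiv:2206.06971 — 3 statements merged into one kernel-verified Lean document; each statement's English description precedes it below -/
import Mathlib

section
/- Let B and D be symmetric positive semidefinite N×N matrices with B positive definite, and let A = B + ε⁻¹ D for ε > 0. If c is a nonzero vector with Dc = 0, then κ(c) = ‖A⁻¹‖·‖Ac‖/‖c‖ ≤ λ_max(B)/λ_min(B), independent of ε. -/
open scoped InnerProductSpace

/-! The penalty term vanishes on `c`, so `A c = B c` and `‖A c‖ ≤ ‖B‖ ‖c‖`; on the other hand the
positive semidefinite penalty can only increase the coercivity constant `α` of `B`, so
`‖A⁻¹‖ ≤ α⁻¹` whatever the value of `ε`. -/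

section Coercive

variable {E : Type*} [NormedAddCommGroup E] [InnerProductSpace ℝ E]

theorem coercive_add_smul_of_nonneg {B D : E →L[ℝ] E} {α t : ℝ}
    (hB : ∀ x, α * ‖x‖ ^ 2 ≤ ⟪B x, x⟫_ℝ) (hD : ∀ x, 0 ≤ ⟪D x, x⟫_ℝ) (ht : 0 ≤ t) (x : E) :
    α * ‖x‖ ^ 2 ≤ ⟪(B + t • D) x, x⟫_ℝ := by
  rw [add_apply, smul_apply, inner_add_left, real_inner_smul_left]
  linarith [hB x, mul_nonneg ht (hD x)]

theorem mul_norm_le_norm_of_coercive {A : E →L[ℝ] E} {α : ℝ}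
    (hA : ∀ x, α * ‖x‖ ^ 2 ≤ ⟪A x, x⟫_ℝ) (x : E) : α * ‖x‖ ≤ ‖A x‖ := by
  rcases eq_or_ne x 0 with rfl | hx
  · simp
  have hx : 0 < ‖x‖ := norm_pos_iff.mpr hx
  refine le_of_mul_le_mul_right ?_ hx
  calc α * ‖x‖ * ‖x‖ = α * ‖x‖ ^ 2 := by ring
    _ ≤ ⟪A x, x⟫_ℝ := hA x
    _ ≤ ‖A x‖ * ‖x‖ := real_inner_le_norm _ _

theorem ContinuousLinearEquiv.norm_symm_le_inv_of_coercive (A : E ≃L[ℝ] E) {α : ℝ} (hα : 0 < α)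
    (hA : ∀ x, α * ‖x‖ ^ 2 ≤ ⟪A x, x⟫_ℝ) : ‖(A.symm : E →L[ℝ] E)‖ ≤ α⁻¹ := by
  refine ContinuousLinearMap.opNorm_le_bound _ (inv_nonneg.mpr hα.le) fun y => ?_
  have hy := mul_norm_le_norm_of_coercive (A := (A : E →L[ℝ] E)) hA (A.symm y)
  rw [ContinuousLinearEquiv.coe_coe, A.apply_symm_apply] at hy
  rw [ContinuousLinearEquiv.coe_coe, inv_mul_eq_div, le_div_iff₀ hα, mul_comm]
  exact hy

end Coercive

theorem effective_cond_ker_penalty_general (n : ℕ)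
    (B D : EuclideanSpace ℝ (Fin n) →L[ℝ] EuclideanSpace ℝ (Fin n))
    (α : ℝ) (hα : 0 < α)
    (hBcoer : ∀ x, α * ‖x‖ ^ 2 ≤ ⟪B x, x⟫_ℝ)
    (hDpsd : ∀ x, 0 ≤ ⟪D x, x⟫_ℝ)
    (ε : ℝ) (hε : 0 < ε)
    (A : EuclideanSpace ℝ (Fin n) ≃L[ℝ] EuclideanSpace ℝ (Fin n))
    (hA : (A : EuclideanSpace ℝ (Fin n) →L[ℝ] EuclideanSpace ℝ (Fin n)) = B + ε⁻¹ • D)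
    (c : EuclideanSpace ℝ (Fin n)) (hc : c ≠ 0) (hDc : D c = 0) :
    ‖(A.symm : EuclideanSpace ℝ (Fin n) →L[ℝ] EuclideanSpace ℝ (Fin n))‖ * ‖A c‖ / ‖c‖ ≤
      ‖B‖ / α := by
  have hAcoer : ∀ x, α * ‖x‖ ^ 2 ≤ ⟪A x, x⟫_ℝ := fun x => by
    rw [← ContinuousLinearEquiv.coe_coe, hA]
    exact coercive_add_smul_of_nonneg hBcoer hDpsd (inv_nonneg.mpr hε.le) x
  have hAc : A c = B c := by
    rw [← ContinuousLinearEquiv.coe_coe, hA]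
    simp [hDc]
  have hc : 0 < ‖c‖ := norm_pos_iff.mpr hc
  rw [div_le_div_iff₀ hc hα, hAc]
  calc ‖(A.symm : _ →L[ℝ] _)‖ * ‖B c‖ * α ≤ α⁻¹ * (‖B‖ * ‖c‖) * α := by
        gcongr
        · exact A.norm_symm_le_inv_of_coercive hα hAcoer
        · exact B.le_opNorm c
    _ = ‖B‖ * ‖c‖ := by field_simp

/-- If `A = B + ε⁻¹ D` and `D c = 0`, the effective condition number at `c` is bounded
by `λ_max(B)/λ_min(B)` (here `λ_max(B) = ‖B‖`), independently of `ε`. -/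
theorem effective_cond_ker_penalty (n : ℕ)
    (B D : EuclideanSpace ℝ (Fin n) →L[ℝ] EuclideanSpace ℝ (Fin n))
    (hBsym : ∀ x y, ⟪B x, y⟫_ℝ = ⟪x, B y⟫_ℝ)
    (hDsym : ∀ x y, ⟪D x, y⟫_ℝ = ⟪x, D y⟫_ℝ)
    (α : ℝ) (hα : 0 < α)
    (hBcoer : ∀ x, α * ‖x‖ ^ 2 ≤ ⟪B x, x⟫_ℝ)
    (hDpsd : ∀ x, 0 ≤ ⟪D x, x⟫_ℝ)
    (ε : ℝ) (hε : 0 < ε)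
    (A : EuclideanSpace ℝ (Fin n) ≃L[ℝ] EuclideanSpace ℝ (Fin n))
    (hA : (A : EuclideanSpace ℝ (Fin n) →L[ℝ] EuclideanSpace ℝ (Fin n)) = B + ε⁻¹ • D)
    (c : EuclideanSpace ℝ (Fin n)) (hc : c ≠ 0) (hDc : D c = 0) :
    ‖(A.symm : EuclideanSpace ℝ (Fin n) →L[ℝ] EuclideanSpace ℝ (Fin n))‖ * ‖A c‖ / ‖c‖ ≤
      ‖B‖ / α :=
  effective_cond_ker_penalty_general n B D α hα hBcoer hDpsd ε hε A hA c hc hDc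
end

section
/- Let A_ε = B + ε⁻¹D with B symmetric positive definite, D symmetric positive semidefinite, and let u_ε = A_ε⁻¹f. As ε → 0⁺, u_ε converges to u₀, the solution of the constrained problem: u₀ ∈ ker D and ⟨Bu₀, v⟩ = ⟨f, v⟩ for all v ∈ ker D. -/
open scoped InnerProductSpace
open Filter

/-!
Put `e = u ε - u₀` and `r = f - B u₀`. Then `B e + ε⁻¹ D e = r`, and the Galerkin condition says
`r ⊥ ker D`. Splitting `e = p + q` with `p ∈ ker D`, `q ∈ (ker D)ᗮ` and testing with `e` gives
`⟪B e, e⟫ + ε⁻¹ ⟪D q, q⟫ = ⟪r, q⟫`. In finite dimension `B` is coercive, and so is `D` on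
`(ker D)ᗮ`, where it is positive definite; hence `α ‖e‖² + ε⁻¹ β ‖q‖² ≤ ‖r‖ ‖q‖`, and completing the
square in `‖q‖` yields `4 α β ‖e‖² ≤ ε ‖r‖²`.
-/

variable {E : Type*} [NormedAddCommGroup E] [InnerProductSpace ℝ E]

theorem LinearMap.IsSymmetric.apply_eq_zero_of_inner_map_self_eq_zero {T : E →ₗ[ℝ] E}
    (hT : T.IsSymmetric) (hpos : ∀ x, 0 ≤ ⟪T x, x⟫_ℝ) {x : E} (hx : ⟪T x, x⟫_ℝ = 0) :
    T x = 0 := by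
  have hcross : ∀ v, ⟪T x, v⟫_ℝ = 0 := by
    intro v
    -- `t ↦ ⟪T (x + t v), x + t v⟫` is a nonnegative quadratic without constant term.
    have hquad : ∀ t : ℝ, 0 ≤ ⟪T v, v⟫_ℝ * (t * t) + 2 * ⟪T x, v⟫_ℝ * t + 0 := by
      intro t
      have := hpos (x + t • v)
      simp only [map_add, map_smul, inner_add_left, inner_add_right, real_inner_smul_left,
        real_inner_smul_right, hx, hT v x, real_inner_comm (T x) v] at this
      linarith
    have := discrim_le_zero hquad
    rw [discrim] at this
    nlinarith [sq_nonneg ⟪T x, v⟫_ℝ, hpos v]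
  simpa using hcross (T x)

theorem exists_pos_mul_norm_sq_le_inner_map_self [FiniteDimensional ℝ E] (T : E →ₗ[ℝ] E)
    (K : Submodule ℝ E) (hpos : ∀ x ∈ K, x ≠ 0 → 0 < ⟪T x, x⟫_ℝ) :
    ∃ c, 0 < c ∧ ∀ x ∈ K, c * ‖x‖ ^ 2 ≤ ⟪T x, x⟫_ℝ := by
  have hcompact : IsCompact ((K : Set E) ∩ Metric.sphere 0 1) :=
    (isCompact_sphere 0 1).inter_left K.closed_of_finiteDimensional
  obtain ⟨c, hc, hmin⟩ := hcompact.exists_forall_le' (f := fun y => ⟪T y, y⟫_ℝ)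
    (T.continuous_of_finiteDimensional.inner continuous_id).continuousOn
    fun y hy => hpos y hy.1 (ne_zero_of_mem_unit_sphere ⟨y, hy.2⟩)
  refine ⟨c, hc, fun x hx => ?_⟩
  rcases eq_or_ne x 0 with rfl | hx0
  · simp
  have hnorm : ‖x‖ ≠ 0 := norm_ne_zero_iff.mpr hx0
  have hunit := hmin (‖x‖⁻¹ • x) ⟨K.smul_mem _ hx, by simp [norm_smul, hnorm]⟩
  rw [map_smul, real_inner_smul_left, real_inner_smul_right] at hunit
  calc c * ‖x‖ ^ 2 ≤ ‖x‖⁻¹ * (‖x‖⁻¹ * ⟪T x, x⟫_ℝ) * ‖x‖ ^ 2 := by gcongr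
    _ = ⟪T x, x⟫_ℝ := by field_simp

theorem LinearMap.IsSymmetric.inner_map_self_pos_of_mem_orthogonal_ker {T : E →ₗ[ℝ] E}
    (hT : T.IsSymmetric) (hpos : ∀ x, 0 ≤ ⟪T x, x⟫_ℝ) {x : E} (hx : x ∈ (LinearMap.ker T)ᗮ)
    (hx0 : x ≠ 0) : 0 < ⟪T x, x⟫_ℝ := by
  refine (hpos x).lt_of_ne fun h => hx0 ?_
  have hker : x ∈ LinearMap.ker T := hT.apply_eq_zero_of_inner_map_self_eq_zero hpos h.symm
  exact inner_self_eq_zero.mp (Submodule.inner_right_of_mem_orthogonal hker hx)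

theorem norm_sq_le_of_penalized_eq (B D : E →ₗ[ℝ] E) [(LinearMap.ker D).HasOrthogonalProjection]
    (hDsym : D.IsSymmetric) {α β ε : ℝ} (hB : ∀ x, α * ‖x‖ ^ 2 ≤ ⟪B x, x⟫_ℝ)
    (hβ : 0 ≤ β) (hD : ∀ q ∈ (LinearMap.ker D)ᗮ, β * ‖q‖ ^ 2 ≤ ⟪D q, q⟫_ℝ) (hε : 0 < ε)
    {e r : E} (hr : r ∈ (LinearMap.ker D)ᗮ) (he : B e + ε⁻¹ • D e = r) :
    4 * α * β * ‖e‖ ^ 2 ≤ ε * ‖r‖ ^ 2 := by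
  obtain ⟨p, hp, q, hq, rfl⟩ := (LinearMap.ker D).exists_add_mem_mem_orthogonal e
  have hDp : D p = 0 := hp
  have hDq : ⟪D (p + q), p + q⟫_ℝ = ⟪D q, q⟫_ℝ := by
    rw [map_add, hDp, zero_add, inner_add_right, hDsym, hDp, inner_zero_right, zero_add]
  have henergy : ⟪B (p + q), p + q⟫_ℝ + ε⁻¹ * ⟪D q, q⟫_ℝ = ⟪r, q⟫_ℝ := by
    rw [← hDq, ← real_inner_smul_left, ← inner_add_left, he, inner_add_right,
      Submodule.inner_left_of_mem_orthogonal hp hr, zero_add]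
  have hbound : α * ε * ‖p + q‖ ^ 2 + β * ‖q‖ ^ 2 ≤ ε * (‖r‖ * ‖q‖) := by
    have := mul_le_mul_of_nonneg_left (henergy.le.trans (real_inner_le_norm r q)) hε.le
    rw [mul_add, ← mul_assoc, mul_inv_cancel₀ hε.ne', one_mul] at this
    nlinarith [hB (p + q), hD q hq]
  refine le_of_mul_le_mul_left ?_ hε
  nlinarith [sq_nonneg (ε * ‖r‖ - 2 * β * ‖q‖)]

theorem tendsto_nhdsWithin_Ioi_of_norm_sub_sq_le {F : Type*} [SeminormedAddCommGroup F]
    {u : ℝ → F} {a : F} {C : ℝ} (h : ∀ ε > 0, ‖u ε - a‖ ^ 2 ≤ C * ε) :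
    Tendsto u (nhdsWithin 0 (Set.Ioi 0)) (nhds a) := by
  rw [tendsto_iff_norm_sub_tendsto_zero]
  have hsqrt : Tendsto (fun ε => √(C * ε)) (nhdsWithin 0 (Set.Ioi 0)) (nhds 0) := by
    simpa using ((continuous_const.mul continuous_id).sqrt.tendsto 0).mono_left
      nhdsWithin_le_nhds
  refine squeeze_zero' (Eventually.of_forall fun _ => norm_nonneg _) ?_ hsqrt
  filter_upwards [self_mem_nhdsWithin] with ε hε
  exact Real.le_sqrt_of_sq_le (h ε hε)

theorem penalized_solution_tendsto_constrained_general (n : ℕ)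
    (B D : EuclideanSpace ℝ (Fin n) →L[ℝ] EuclideanSpace ℝ (Fin n))
    (hDsym : ∀ x y, ⟪D x, y⟫_ℝ = ⟪x, D y⟫_ℝ)
    (hBpd : ∀ x, x ≠ 0 → 0 < ⟪B x, x⟫_ℝ)
    (hDpsd : ∀ x, 0 ≤ ⟪D x, x⟫_ℝ)
    (f : EuclideanSpace ℝ (Fin n))
    (u : ℝ → EuclideanSpace ℝ (Fin n))
    (hu : ∀ ε : ℝ, 0 < ε → (B + ε⁻¹ • D) (u ε) = f)
    (u₀ : EuclideanSpace ℝ (Fin n)) (hu₀ : D u₀ = 0)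
    (hGalerkin : ∀ v, D v = 0 → ⟪B u₀, v⟫_ℝ = ⟪f, v⟫_ℝ) :
    Tendsto u (nhdsWithin 0 (Set.Ioi 0)) (nhds u₀) := by
  let Dₗ : EuclideanSpace ℝ (Fin n) →ₗ[ℝ] EuclideanSpace ℝ (Fin n) := D
  have hDₗsym : Dₗ.IsSymmetric := hDsym
  obtain ⟨α, hα, hBcoer⟩ := exists_pos_mul_norm_sq_le_inner_map_self (B : _ →ₗ[ℝ] _) ⊤
    fun x _ => hBpd x
  obtain ⟨β, hβ, hDcoer⟩ := exists_pos_mul_norm_sq_le_inner_map_self Dₗ (LinearMap.ker Dₗ)ᗮ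
    fun x => hDₗsym.inner_map_self_pos_of_mem_orthogonal_ker hDpsd
  have hres : f - B u₀ ∈ (LinearMap.ker Dₗ)ᗮ :=
    (Submodule.mem_orthogonal' _ _).2 fun v hv => by rw [inner_sub_left, hGalerkin v hv, sub_self]
  refine tendsto_nhdsWithin_Ioi_of_norm_sub_sq_le (C := ‖f - B u₀‖ ^ 2 / (4 * α * β))
    fun ε hε => ?_
  have hstep : B (u ε - u₀) + ε⁻¹ • D (u ε - u₀) = f - B u₀ := by
    rw [← hu ε hε, add_apply, smul_apply, map_sub, map_sub, hu₀, sub_zero]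
    abel
  have hest := norm_sq_le_of_penalized_eq _ Dₗ hDₗsym (fun x => hBcoer x trivial) hβ.le hDcoer hε
    hres hstep
  rw [div_mul_eq_mul_div, le_div_iff₀ (by positivity)]
  linarith

/-- As `ε → 0⁺`, the penalized solution `u_ε` of `(B + ε⁻¹D)u_ε = f` converges to the
solution `u₀` of the constrained problem on `ker D`. -/
theorem penalized_solution_tendsto_constrained (n : ℕ)
    (B D : EuclideanSpace ℝ (Fin n) →L[ℝ] EuclideanSpace ℝ (Fin n))
    (hBsym : ∀ x y, ⟪B x, y⟫_ℝ = ⟪x, B y⟫_ℝ)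
    (hDsym : ∀ x y, ⟪D x, y⟫_ℝ = ⟪x, D y⟫_ℝ)
    (hBpd : ∀ x, x ≠ 0 → 0 < ⟪B x, x⟫_ℝ)
    (hDpsd : ∀ x, 0 ≤ ⟪D x, x⟫_ℝ)
    (f : EuclideanSpace ℝ (Fin n))
    (u : ℝ → EuclideanSpace ℝ (Fin n))
    (hu : ∀ ε : ℝ, 0 < ε → (B + ε⁻¹ • D) (u ε) = f)
    (u₀ : EuclideanSpace ℝ (Fin n)) (hu₀ : D u₀ = 0)
    (hGalerkin : ∀ v, D v = 0 → ⟪B u₀, v⟫_ℝ = ⟪f, v⟫_ℝ) :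
    Tendsto u (nhdsWithin 0 (Set.Ioi 0)) (nhds u₀) :=
  penalized_solution_tendsto_constrained_general n B D hDsym hBpd hDpsd f u hu u₀ hu₀ hGalerkin
end

section
/- With A_ε = B + ε⁻¹D, B symmetric positive definite, D symmetric positive semidefinite, and u_ε = A_ε⁻¹f, if f is such that the limit solution u₀ ∈ ker D is nonzero, then the effective condition numbers κ(u_ε) = ‖A_ε⁻¹‖·‖f‖/‖u_ε‖ remain bounded as ε → 0⁺, even though κ(A_ε) → ∞ whenever D ≠ 0. -/
open scoped InnerProductSpace

open Filter

set_option maxHeartbeats 1000000 in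
/-- If the constrained limit solution `u₀ ∈ ker D` is nonzero, the effective condition
numbers `κ(u_ε)` stay bounded as `ε → 0⁺`, while `κ(A_ε) → ∞` since `D ≠ 0`. -/
theorem effective_cond_bounded_cond_blows_up (n : ℕ)
    (B D : EuclideanSpace ℝ (Fin n) →L[ℝ] EuclideanSpace ℝ (Fin n))
    (hBsym : ∀ x y, ⟪B x, y⟫_ℝ = ⟪x, B y⟫_ℝ)
    (hDsym : ∀ x y, ⟪D x, y⟫_ℝ = ⟪x, D y⟫_ℝ)
    (hBpd : ∀ x, x ≠ 0 → 0 < ⟪B x, x⟫_ℝ)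
    (hDpsd : ∀ x, 0 ≤ ⟪D x, x⟫_ℝ)
    (hD : D ≠ 0)
    (A : ℝ → (EuclideanSpace ℝ (Fin n) ≃L[ℝ] EuclideanSpace ℝ (Fin n)))
    (hA : ∀ ε : ℝ, 0 < ε →
      ((A ε : EuclideanSpace ℝ (Fin n) →L[ℝ] EuclideanSpace ℝ (Fin n)) = B + ε⁻¹ • D))
    (f : EuclideanSpace ℝ (Fin n))
    (u₀ : EuclideanSpace ℝ (Fin n)) (hu₀ker : D u₀ = 0) (hu₀ : u₀ ≠ 0)
    (hGalerkin : ∀ v, D v = 0 → ⟪B u₀, v⟫_ℝ = ⟪f, v⟫_ℝ) :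
    (∃ C : ℝ, ∀ᶠ ε in nhdsWithin 0 (Set.Ioi 0),
        ‖((A ε).symm : EuclideanSpace ℝ (Fin n) →L[ℝ] EuclideanSpace ℝ (Fin n))‖ * ‖f‖ /
          ‖(A ε).symm f‖ ≤ C) ∧
      Tendsto (fun ε =>
          ‖((A ε) : EuclideanSpace ℝ (Fin n) →L[ℝ] EuclideanSpace ℝ (Fin n))‖ *
            ‖((A ε).symm : EuclideanSpace ℝ (Fin n) →L[ℝ] EuclideanSpace ℝ (Fin n))‖)
        (nhdsWithin 0 (Set.Ioi 0)) atTop := by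
  -- the constant c = ⟪B u₀, u₀⟫ > 0
  set c : ℝ := ⟪B u₀, u₀⟫_ℝ with hc_def
  have hc : 0 < c := hBpd u₀ hu₀
  have hfu₀ : ⟪f, u₀⟫_ℝ = c := (hGalerkin u₀ hu₀ker).symm
  have hBu₀ : B u₀ ≠ 0 := by
    intro h
    rw [hc_def, h] at hc
    simp at hc
  have hBu₀pos : 0 < ‖B u₀‖ := norm_pos_iff.mpr hBu₀
  -- key identity: ⟪u_ε, B u₀⟫ = c for all ε > 0
  have hkey : ∀ ε : ℝ, 0 < ε → ⟪(A ε).symm f, B u₀⟫_ℝ = c := by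
    intro ε hε
    set u : EuclideanSpace ℝ (Fin n) := (A ε).symm f with hu_def
    have hAu : (A ε : EuclideanSpace ℝ (Fin n) →L[ℝ] EuclideanSpace ℝ (Fin n)) u = f := by
      rw [ContinuousLinearEquiv.coe_coe]
      exact (A ε).apply_symm_apply f
    have h1 : ⟪f, u₀⟫_ℝ = ⟪u, B u₀⟫_ℝ := by
      rw [← hAu, hA ε hε]
      simp only [ContinuousLinearMap.add_apply, ContinuousLinearMap.smul_apply]
      rw [inner_add_left, real_inner_smul_left, hBsym, hDsym, hu₀ker]
      simp
    rw [← h1, hfu₀]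
  -- lower bound on ‖u_ε‖
  have hulow : ∀ ε : ℝ, 0 < ε → c ≤ ‖(A ε).symm f‖ * ‖B u₀‖ := by
    intro ε hε
    calc c = ⟪(A ε).symm f, B u₀⟫_ℝ := (hkey ε hε).symm
    _ ≤ ‖(A ε).symm f‖ * ‖B u₀‖ := real_inner_le_norm _ _
  have hupos : ∀ ε : ℝ, 0 < ε → 0 < ‖(A ε).symm f‖ := by
    intro ε hε
    by_contra h
    push_neg at h
    nlinarith [hulow ε hε, norm_nonneg ((A ε).symm f), hBu₀pos]
  -- coercivity constant β via compactness of the unit sphere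
  have hne : (Metric.sphere (0 : EuclideanSpace ℝ (Fin n)) 1).Nonempty := by
    refine ⟨‖u₀‖⁻¹ • u₀, ?_⟩
    have h1 : ‖‖u₀‖⁻¹ • u₀‖ = 1 := by
      rw [norm_smul, norm_inv, norm_norm, inv_mul_cancel₀ (norm_ne_zero_iff.mpr hu₀)]
    simpa [Metric.mem_sphere] using h1
  have hcont : ContinuousOn (fun x : EuclideanSpace ℝ (Fin n) => ⟪B x, x⟫_ℝ)
      (Metric.sphere 0 1) :=
    (B.continuous.inner continuous_id).continuousOn
  obtain ⟨x₀, hx₀S, hx₀min⟩ :=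
    (isCompact_sphere (0 : EuclideanSpace ℝ (Fin n)) 1).exists_isMinOn hne hcont
  set β : ℝ := ⟪B x₀, x₀⟫_ℝ with hβ_def
  have hx₀n : ‖x₀‖ = 1 := by simpa using hx₀S
  have hβ : 0 < β := hBpd x₀ (by intro h; rw [h] at hx₀n; simp at hx₀n)
  have hcoer : ∀ y : EuclideanSpace ℝ (Fin n), β * ‖y‖ ^ 2 ≤ ⟪B y, y⟫_ℝ := by
    intro y
    rcases eq_or_ne y 0 with rfl | hy
    · simp
    · have hyn : (0:ℝ) < ‖y‖ := norm_pos_iff.mpr hy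
      set w : EuclideanSpace ℝ (Fin n) := ‖y‖⁻¹ • y with hw_def
      have hwS : w ∈ Metric.sphere (0:EuclideanSpace ℝ (Fin n)) 1 := by
        have h1 : ‖w‖ = 1 := by
          rw [hw_def, norm_smul, norm_inv, norm_norm, inv_mul_cancel₀ hyn.ne']
        simpa [Metric.mem_sphere] using h1
      have hβw : β ≤ ⟪B w, w⟫_ℝ := hx₀min hwS
      have hw : ⟪B w, w⟫_ℝ = ‖y‖⁻¹ * (‖y‖⁻¹ * ⟪B y, y⟫_ℝ) := by
        rw [hw_def, map_smul, real_inner_smul_left, real_inner_smul_right]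
      rw [hw] at hβw
      have h3 : ‖y‖⁻¹ * (‖y‖⁻¹ * ⟪B y, y⟫_ℝ) * ‖y‖ ^ 2 = ⟪B y, y⟫_ℝ := by
        generalize ⟪B y, y⟫_ℝ = q
        field_simp
      calc β * ‖y‖ ^ 2 ≤ ‖y‖⁻¹ * (‖y‖⁻¹ * ⟪B y, y⟫_ℝ) * ‖y‖ ^ 2 := by
            nlinarith [sq_nonneg ‖y‖]
      _ = ⟪B y, y⟫_ℝ := h3
  -- ‖A_ε y‖ ≥ β ‖y‖, hence ‖(A ε).symm‖ ≤ β⁻¹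
  have hAcoer : ∀ ε : ℝ, 0 < ε → ∀ y : EuclideanSpace ℝ (Fin n),
      β * ‖y‖ ≤ ‖(A ε : EuclideanSpace ℝ (Fin n) →L[ℝ] EuclideanSpace ℝ (Fin n)) y‖ := by
    intro ε hε y
    rcases eq_or_ne y 0 with rfl | hy
    · simp
    · have hyn : (0:ℝ) < ‖y‖ := norm_pos_iff.mpr hy
      have h1 : β * ‖y‖ ^ 2
          ≤ ⟪(A ε : EuclideanSpace ℝ (Fin n) →L[ℝ] EuclideanSpace ℝ (Fin n)) y, y⟫_ℝ := by
        rw [hA ε hε]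
        simp only [ContinuousLinearMap.add_apply, ContinuousLinearMap.smul_apply]
        rw [inner_add_left, real_inner_smul_left]
        have h2 : 0 ≤ ε⁻¹ * ⟪D y, y⟫_ℝ :=
          mul_nonneg (inv_nonneg.mpr hε.le) (hDpsd y)
        have := hcoer y
        linarith
      have h3 : ⟪(A ε : EuclideanSpace ℝ (Fin n) →L[ℝ] EuclideanSpace ℝ (Fin n)) y, y⟫_ℝ
          ≤ ‖(A ε : EuclideanSpace ℝ (Fin n) →L[ℝ] EuclideanSpace ℝ (Fin n)) y‖ * ‖y‖ :=
        real_inner_le_norm _ _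
      nlinarith
  have hsymm_le : ∀ ε : ℝ, 0 < ε →
      ‖((A ε).symm : EuclideanSpace ℝ (Fin n) →L[ℝ] EuclideanSpace ℝ (Fin n))‖ ≤ β⁻¹ := by
    intro ε hε
    refine ContinuousLinearMap.opNorm_le_bound _ (inv_nonneg.mpr hβ.le) fun g => ?_
    have h1 := hAcoer ε hε ((A ε).symm g)
    rw [ContinuousLinearEquiv.coe_coe, (A ε).apply_symm_apply] at h1
    rw [inv_mul_eq_div, le_div_iff₀ hβ]
    simp only [ContinuousLinearEquiv.coe_coe] at h1 ⊢
    linarith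
  -- a vector z with ⟪D z, z⟫ > 0
  obtain ⟨z, hz⟩ : ∃ z : EuclideanSpace ℝ (Fin n), D z ≠ 0 := by
    by_contra h
    push_neg at h
    exact hD (ContinuousLinearMap.ext fun x => by simp [h x])
  have hdz : 0 < ⟪D z, z⟫_ℝ := by
    rcases lt_or_eq_of_le (hDpsd z) with h | h
    · exact h
    · exfalso
      set a : ℝ := ⟪D z, D z⟫_ℝ with ha_def
      have ha : 0 < a := by
        rw [ha_def, real_inner_self_eq_norm_sq]
        exact pow_pos (norm_pos_iff.mpr hz) 2
      set b : ℝ := ⟪D (D z), D z⟫_ℝ with hb_def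
      have hb : 0 ≤ b := hDpsd (D z)
      set t : ℝ := -a / (b + 1) with ht_def
      have hquad : 0 ≤ ⟪D (z + t • D z), z + t • D z⟫_ℝ := hDpsd _
      have h1 : ⟪D (D z), z⟫_ℝ = a := by
        rw [hDsym, ha_def, real_inner_comm]
      have hexp : ⟪D (z + t • D z), z + t • D z⟫_ℝ = 2 * t * a + t ^ 2 * b := by
        rw [map_add, map_smul, inner_add_left, inner_add_right, inner_add_right]
        simp only [real_inner_smul_left, real_inner_smul_right]
        rw [h1, ← h, ← ha_def, ← hb_def]
        ring
      rw [hexp, ht_def] at hquad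
      have hb1 : (0:ℝ) < b + 1 := by linarith
      have hq2 : 0 ≤ (2 * (-a / (b + 1)) * a + (-a / (b + 1)) ^ 2 * b) * (b + 1) ^ 2 :=
        mul_nonneg hquad (by positivity)
      have hexpand : (2 * (-a / (b + 1)) * a + (-a / (b + 1)) ^ 2 * b) * (b + 1) ^ 2
          = a ^ 2 * (-(b + 2)) := by
        field_simp
        ring
      rw [hexpand] at hq2
      nlinarith [sq_nonneg a]
  have hzn : z ≠ 0 := by intro h; rw [h] at hz; simp at hz
  have hznorm : (0:ℝ) < ‖z‖ := norm_pos_iff.mpr hzn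
  have hfpos : (0:ℝ) < ‖f‖ := by
    rcases eq_or_ne f 0 with rfl | h
    · exfalso; rw [inner_zero_left] at hfu₀; linarith
    · exact norm_pos_iff.mpr h
  constructor
  · -- boundedness of effective condition numbers
    refine ⟨β⁻¹ * ‖f‖ * ‖B u₀‖ / c, ?_⟩
    filter_upwards [self_mem_nhdsWithin] with ε (hεm : ε ∈ Set.Ioi 0)
    have hε : (0:ℝ) < ε := hεm
    have h1 := hsymm_le ε hε
    have h2 := hulow ε hε
    have h3 := hupos ε hε
    rw [div_le_div_iff₀ h3 hc]
    have h4 : ‖((A ε).symm : EuclideanSpace ℝ (Fin n) →L[ℝ] EuclideanSpace ℝ (Fin n))‖ * ‖f‖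
        ≤ β⁻¹ * ‖f‖ :=
      mul_le_mul_of_nonneg_right h1 (norm_nonneg f)
    have h5 : 0 ≤ β⁻¹ * ‖f‖ := by positivity
    nlinarith [mul_le_mul_of_nonneg_left h2 h5]
  · -- blow-up of κ(A_ε)
    set K : ℝ := (⟪D z, z⟫_ℝ / ‖z‖ ^ 2) * (c / (‖B u₀‖ * ‖f‖)) with hK_def
    have hK : 0 < K :=
      mul_pos (div_pos hdz (by positivity)) (div_pos hc (by positivity))
    apply tendsto_atTop_mono' _ _ (tendsto_inv_nhdsGT_zero.atTop_mul_const hK)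
    filter_upwards [self_mem_nhdsWithin] with ε (hεm : ε ∈ Set.Ioi 0)
    have hε : (0:ℝ) < ε := hεm
    -- ‖A ε‖ ≥ ε⁻¹ ⟪Dz,z⟫ / ‖z‖²
    have hnormA : ε⁻¹ * ⟪D z, z⟫_ℝ
        ≤ ‖((A ε) : EuclideanSpace ℝ (Fin n) →L[ℝ] EuclideanSpace ℝ (Fin n))‖ * ‖z‖ ^ 2 := by
      have h1 : ε⁻¹ * ⟪D z, z⟫_ℝ
          ≤ ⟪(A ε : EuclideanSpace ℝ (Fin n) →L[ℝ] EuclideanSpace ℝ (Fin n)) z, z⟫_ℝ := by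
        rw [hA ε hε]
        simp only [ContinuousLinearMap.add_apply, ContinuousLinearMap.smul_apply]
        rw [inner_add_left, real_inner_smul_left]
        have := hBpd z hzn
        linarith
      have h2 : ⟪(A ε : EuclideanSpace ℝ (Fin n) →L[ℝ] EuclideanSpace ℝ (Fin n)) z, z⟫_ℝ
          ≤ ‖(A ε : EuclideanSpace ℝ (Fin n) →L[ℝ] EuclideanSpace ℝ (Fin n)) z‖ * ‖z‖ :=
        real_inner_le_norm _ _
      have h3 : ‖(A ε : EuclideanSpace ℝ (Fin n) →L[ℝ] EuclideanSpace ℝ (Fin n)) z‖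
          ≤ ‖((A ε) : EuclideanSpace ℝ (Fin n) →L[ℝ] EuclideanSpace ℝ (Fin n))‖ * ‖z‖ :=
        (A ε : EuclideanSpace ℝ (Fin n) →L[ℝ] EuclideanSpace ℝ (Fin n)).le_opNorm z
      nlinarith
    -- ‖(A ε).symm‖ ≥ c / (‖B u₀‖ ‖f‖)
    have hnormS : c / (‖B u₀‖ * ‖f‖)
        ≤ ‖((A ε).symm : EuclideanSpace ℝ (Fin n) →L[ℝ] EuclideanSpace ℝ (Fin n))‖ := by
      have h1 : ‖(A ε).symm f‖
          ≤ ‖((A ε).symm : EuclideanSpace ℝ (Fin n) →L[ℝ] EuclideanSpace ℝ (Fin n))‖ * ‖f‖ := by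
        exact ((A ε).symm : EuclideanSpace ℝ (Fin n) →L[ℝ] EuclideanSpace ℝ (Fin n)).le_opNorm f
      have h2 := hulow ε hε
      rw [div_le_iff₀ (by positivity)]
      nlinarith [norm_nonneg ((A ε).symm : EuclideanSpace ℝ (Fin n) →L[ℝ] EuclideanSpace ℝ (Fin n))]
    have hApos : 0 ≤ ‖((A ε) : EuclideanSpace ℝ (Fin n) →L[ℝ] EuclideanSpace ℝ (Fin n))‖ :=
      norm_nonneg _
    have h4 : ε⁻¹ * ⟪D z, z⟫_ℝ / ‖z‖ ^ 2
        ≤ ‖((A ε) : EuclideanSpace ℝ (Fin n) →L[ℝ] EuclideanSpace ℝ (Fin n))‖ := by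
      rw [div_le_iff₀ (by positivity)]
      linarith
    calc ε⁻¹ * K = (ε⁻¹ * ⟪D z, z⟫_ℝ / ‖z‖ ^ 2) * (c / (‖B u₀‖ * ‖f‖)) := by
          rw [hK_def]; ring
    _ ≤ ‖((A ε) : EuclideanSpace ℝ (Fin n) →L[ℝ] EuclideanSpace ℝ (Fin n))‖ *
        ‖((A ε).symm : EuclideanSpace ℝ (Fin n) →L[ℝ] EuclideanSpace ℝ (Fin n))‖ :=
          mul_le_mul h4 hnormS (by positivity) hApos
end
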